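/- In any game for a formula F (a justified sequence of moves starting with the proponent asserting F), every formula asserted by a P-move (even-index move) is a positive Gentzen-subformula of F, and every formula asserted by an O-move (odd-index move) is a negative Gentzen-subformula of F. -/

import Mathlib

/-- First-order terms: variables and constants. -/
inductive Tm where
  | var : ℕ → Tm
  | const : ℕ → Tm
deriving DecidableEq

/-- First-order formulas built from atoms with ∧, ∨, →, ∀, ∃
(negation `¬F` abbreviates `F → ⊥` for an atomic `⊥`). -/
inductive Fm where
  | atom : ℕ → List Tm → Fm
  | and : Fm → Fm → Fm
  | or : Fm → Fm → Fm
  | imp : Fm → Fm → Fm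
  | all : ℕ → Fm → Fm
  | ex : ℕ → Fm → Fm
deriving DecidableEq

/-- Substitution of a term for a variable in a term. -/
def Tm.subst (x : ℕ) (t : Tm) : Tm → Tm
  | .var y => if y = x then t else .var y
  | .const c => .const c

/-- Substitution `F[t/x]` of a term for a variable in a formula. -/
def Fm.subst (x : ℕ) (t : Tm) : Fm → Fm
  | .atom p ts => .atom p (ts.map (Tm.subst x t))
  | .and F G => .and (F.subst x t) (G.subst x t)
  | .or F G => .or (F.subst x t) (G.subst x t)
  | .imp F G => .imp (F.subst x t) (G.subst x t)
  | .all y F => if y = x then .all y F else .all y (F.subst x t)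
  | .ex y F => if y = x then .ex y F else .ex y (F.subst x t)

/-- `SubFm b G F` : `G` is a positive (`b = true`) / negative (`b = false`)
Gentzen-subformula of `F`. -/
inductive SubFm : Bool → Fm → Fm → Prop
  | refl (F : Fm) : SubFm true F F
  | and_left  {b F1 F2 F} : SubFm b (.and F1 F2) F → SubFm b F1 F
  | and_right {b F1 F2 F} : SubFm b (.and F1 F2) F → SubFm b F2 F
  | or_left   {b F1 F2 F} : SubFm b (.or F1 F2) F → SubFm b F1 F
  | or_right  {b F1 F2 F} : SubFm b (.or F1 F2) F → SubFm b F2 F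
  | imp_left  {b F1 F2 F} : SubFm b (.imp F1 F2) F → SubFm (!b) F1 F
  | imp_right {b F1 F2 F} : SubFm b (.imp F1 F2) F → SubFm b F2 F
  | all_inst  {b x F' F} (t : Tm) : SubFm b (.all x F') F → SubFm b (F'.subst x t) F
  | ex_inst   {b x F' F} (t : Tm) : SubFm b (.ex x F') F → SubFm b (F'.subst x t) F

/-- Auxiliary symbols and asserted formulas occurring in attacks. -/
inductive DSym where
  | fm : Fm → DSym          -- asserting the antecedent, attacking an implication
  | qand : Bool → DSym      -- ?∧₁ / ?∧₂
  | qor : DSym              -- ?∨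
  | qall : Tm → DSym        -- ?∀[t/x]
  | qex : DSym              -- ?∃
deriving DecidableEq

/-- Moves: attacks `(?, s)` and defences `(!, F)`. -/
inductive DMove where
  | attack : DSym → DMove
  | defend : Fm → DMove
deriving DecidableEq

/-- The formula asserted by a move, if any (defences assert; an attack asserts
exactly when it is the assertion of the antecedent of an implication). -/
def DMove.asserts : DMove → Option Fm
  | .attack (.fm F) => some F
  | .attack _ => none
  | .defend F => some F

/-- The attack table: which symbols attack which formulas. -/
def attacks : Fm → DSym → Prop
  | .imp F1 _, .fm G => G = F1
  | .and _ _, .qand _ => True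
  | .or _ _, .qor => True
  | .all _ _, .qall _ => True
  | .ex _ _, .qex => True
  | _, _ => False

/-- The defence table: `defends F s G` holds when `G` defends the assertion of
`F` against the attack `s`. -/
def defends : Fm → DSym → Fm → Prop
  | .imp _ F2, .fm _, G => G = F2
  | .and F1 F2, .qand i, G => G = (if i then F1 else F2)
  | .or F1 F2, .qor, G => G = F1 ∨ G = F2
  | .all x F, .qall t, G => G = F.subst x t
  | .ex x F, .qex, G => ∃ t, G = F.subst x t
  | _, _, _ => False

/-- A game is a list of moves, each (except the initial one) paired with the
index of its enabler. -/
abbrev GameRec := List (DMove × ℕ)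

/-- A move `m` with enabler index `e` is justified in `g`: an attack must
attack the formula asserted by its enabler; a defence must answer a justified
attack on a formula asserted earlier. -/
def Justified (g : GameRec) (m : DMove) (e : ℕ) : Prop :=
  match m with
  | .attack s => ∃ m' e', g[e]? = some (m', e') ∧
      ∃ F', m'.asserts = some F' ∧ attacks F' s
  | .defend G => ∃ s e', g[e]? = some (.attack s, e') ∧
      ∃ m'' e'', g[e']? = some (m'', e'') ∧
        ∃ F', m''.asserts = some F' ∧ attacks F' s ∧ defends F' s G

/-- `IsGame F g` : `g` is a (possibly partial) game for the formula `F`: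
move 0 asserts `F`; every odd-index (Opponent) move is enabled by its
immediate predecessor; every even-index (Proponent) move is enabled by a
preceding odd-index move; every move is justified; every Proponent assertion
of an atomic formula is a reprise; and no two distinct Proponent defences
with the same enabler assert the same formula. -/
def IsGame (F : Fm) (g : GameRec) : Prop :=
  (g ≠ [] → g[0]? = some (DMove.defend F, 0)) ∧
  (∀ i, 0 < i → ∀ m e, g[i]? = some (m, e) →
    (i % 2 = 1 → e = i - 1) ∧ (i % 2 = 0 → e < i ∧ e % 2 = 1)) ∧
  (∀ i, 0 < i → ∀ m e, g[i]? = some (m, e) → Justified g m e) ∧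
  (∀ i, 0 < i → i % 2 = 0 → ∀ m e, g[i]? = some (m, e) →
    ∀ p ts, m.asserts = some (Fm.atom p ts) →
      ∃ j < i, j % 2 = 1 ∧ ∃ m' e', g[j]? = some (m', e') ∧
        m'.asserts = some (Fm.atom p ts)) ∧
  (∀ i j, i % 2 = 0 → j % 2 = 0 → ∀ G e,
    g[i]? = some (DMove.defend G, e) → g[j]? = some (DMove.defend G, e) → i = j)

/-- A finite game is won by the Proponent iff it is a game and no move
(in particular no Opponent move) legally extends it. -/
def WonByP (F : Fm) (g : GameRec) : Prop :=
  IsGame F g ∧ ∀ m e, ¬ IsGame F (g ++ [(m, e)])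

/- Induction along the enabler relation: a P-move is a defence answering an O-attack on an
earlier P-assertion (same polarity), or an attack asserting the antecedent of an O-assertion
(flipped polarity); symmetrically for O-moves. Enablers change parity, and an implication's
antecedent is exactly where the Gentzen polarity flips. -/

namespace SubFm

variable {b : Bool} {F F' G : Fm} {s : DSym}

theorem of_defends (hs : defends F' s G) (hF' : SubFm b F' F) : SubFm b G F := by
  match F', s, hs with
  | .imp _ _, .fm _, hs => obtain rfl := hs; exact hF'.imp_right
  | .and _ _, .qand true, hs => obtain rfl := hs; exact hF'.and_left
  | .and _ _, .qand false, hs => obtain rfl := hs; exact hF'.and_right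
  | .or _ _, .qor, hs => obtain rfl | rfl := hs; exacts [hF'.or_left, hF'.or_right]
  | .all _ _, .qall t, hs => obtain rfl := hs; exact hF'.all_inst t
  | .ex _ _, .qex, hs => obtain ⟨t, rfl⟩ := hs; exact hF'.ex_inst t

theorem of_attacks_fm (hs : attacks F' (.fm G)) (hF' : SubFm b F' F) : SubFm (!b) G F := by
  match F', hs with
  | .imp _ _, hs => obtain rfl := hs; exact hF'.imp_left

end SubFm

namespace IsGame

variable {F : Fm} {g : GameRec} {i e : ℕ} {m : DMove}

theorem getElem?_zero (hg : IsGame F g) {x : DMove × ℕ} (hx : g[i]? = some x) :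
    g[0]? = some (.defend F, 0) :=
  hg.1 (List.ne_nil_of_mem (List.mem_of_getElem? hx))

theorem enabler_lt_and_parity (hg : IsGame F g) (hi : 0 < i) (hm : g[i]? = some (m, e)) :
    e < i ∧ decide (e % 2 = 0) = !decide (i % 2 = 0) := by
  have := hg.2.1 i hi m e hm
  refine ⟨by omega, ?_⟩
  rw [Bool.eq_not_iff]
  simp only [ne_eq, decide_eq_decide]
  omega

theorem pos_of_getElem?_attack {s : DSym} {e' : ℕ} (hg : IsGame F g)
    (he : g[e]? = some (.attack s, e')) : 0 < e := by
  refine Nat.pos_of_ne_zero fun h0 => ?_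
  subst h0
  simp [hg.getElem?_zero he] at he

theorem subFm_of_asserts (hg : IsGame F g) {G : Fm} (hm : g[i]? = some (m, e))
    (hG : m.asserts = some G) : SubFm (decide (i % 2 = 0)) G F := by
  induction i using Nat.strong_induction_on generalizing m e G with
  | _ i IH =>
  rcases Nat.eq_zero_or_pos i with rfl | hi
  · rw [hg.getElem?_zero hm] at hm
    cases hm
    cases hG
    exact .refl F
  · obtain ⟨hei, he_parity⟩ := hg.enabler_lt_and_parity hi hm
    match m, hg.2.2.1 i hi m e hm with
    | .attack s, ⟨_, _, he, F', hF', hs⟩ =>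
      obtain rfl : s = .fm G := by cases s <;> simp_all [DMove.asserts]
      simpa only [he_parity, Bool.not_not] using (IH e hei he hF').of_attacks_fm hs
    | .defend G', ⟨s, e', he, _, _, he', F', hF', _, hs⟩ =>
      obtain rfl : G' = G := by simpa [DMove.asserts] using hG
      obtain ⟨he'e, he'_parity⟩ := hg.enabler_lt_and_parity (hg.pos_of_getElem?_attack he) he
      simpa only [he'_parity, he_parity, Bool.not_not] using
        (IH e' (he'e.trans hei) he' hF').of_defends hs

end IsGame

/-- In any game for `F`, every formula asserted by a P-move (even index) is a
positive Gentzen-subformula of `F`, and every formula asserted by an O-move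
(odd index) is a negative Gentzen-subformula of `F`. -/
theorem stmt_10 (F : Fm) (g : GameRec) (hg : IsGame F g)
    (i : ℕ) (m : DMove) (e : ℕ) (hi : g[i]? = some (m, e))
    (G : Fm) (hG : m.asserts = some G) :
    (i % 2 = 0 → SubFm true G F) ∧ (i % 2 = 1 → SubFm false G F) := by
  have h := hg.subFm_of_asserts hi hG
  refine ⟨fun hP => ?_, fun hO => ?_⟩
  · simpa [hP] using h
  · simpa [hO] using h
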